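/- For distinct propositional variables p and q, the formula ((p → (q → ⊥)) → ⊥) → p is not a theorem of minimal implicational natural deduction: it is not derivable from the empty set of assumptions. -/

import Mathlib

/-!
Derivability is sound for two-valued semantics in which `⊥` is an ordinary atom. Interpreting
`⊥` as true makes every formula of the shape `χ → ⊥` true, so the antecedent
`(p → (q → ⊥)) → ⊥` holds while the consequent `p` can be made false.
-/

/-- Formulas of minimal implicational logic: propositional variables,
the atomic constant ⊥ (no inference rules), and implication. -/
inductive IForm : Type
  | var : ℕ → IForm
  | bot : IForm
  | imp : IForm → IForm → IForm
deriving DecidableEq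

/-- Minimal implicational natural deduction. -/
inductive IDeriv : Set IForm → IForm → Prop
  | ax {Γ : Set IForm} {φ : IForm} : φ ∈ Γ → IDeriv Γ φ
  | impI {Γ : Set IForm} {α β : IForm} :
      IDeriv (insert α Γ) β → IDeriv Γ (IForm.imp α β)
  | impE {Γ : Set IForm} {α β : IForm} :
      IDeriv Γ α → IDeriv Γ (IForm.imp α β) → IDeriv Γ β

/-- Boolean evaluation of an implicational formula under a valuation `v` of
the propositional variables and a Boolean value `b` for the atom ⊥. -/
def IForm.eval (v : ℕ → Bool) (b : Bool) : IForm → Bool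
  | IForm.var n => v n
  | IForm.bot => b
  | IForm.imp α β => !(α.eval v b) || (β.eval v b)

@[simp]
theorem IForm.eval_imp_eq_true {v : ℕ → Bool} {b : Bool} {α β : IForm} :
    (α.imp β).eval v b = true ↔ (α.eval v b = true → β.eval v b = true) := by
  cases h : α.eval v b <;> simp [IForm.eval, h]

theorem IDeriv.eval_eq_true {Γ : Set IForm} {φ : IForm} (h : IDeriv Γ φ) {v : ℕ → Bool}
    {b : Bool} (hΓ : ∀ ψ ∈ Γ, ψ.eval v b = true) : φ.eval v b = true := by
  induction h with
  | ax hφ => exact hΓ _ hφ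
  | impI _ ih =>
    exact IForm.eval_imp_eq_true.2 fun hα ↦ ih (Set.forall_mem_insert.2 ⟨hα, hΓ⟩)
  | impE _ _ ihα ihαβ => exact IForm.eval_imp_eq_true.1 (ihαβ hΓ) (ihα hΓ)

theorem not_theorem_bot_general (p q : ℕ) :
    ¬ IDeriv ∅
      (IForm.imp
        (IForm.imp (IForm.imp (IForm.var p) (IForm.imp (IForm.var q) IForm.bot))
          IForm.bot)
        (IForm.var p)) := by
  intro h
  have := h.eval_eq_true (v := fun _ ↦ false) (b := true) (by simp)
  simp [IForm.eval] at this

/-- ((p → (q → ⊥)) → ⊥) → p is not a theorem of minimal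
implicational natural deduction, for distinct variables p and q. -/
theorem not_theorem_bot (p q : ℕ) (hpq : p ≠ q) :
    ¬ IDeriv ∅
      (IForm.imp
        (IForm.imp (IForm.imp (IForm.var p) (IForm.imp (IForm.var q) IForm.bot))
          IForm.bot)
        (IForm.var p)) :=
  not_theorem_bot_general p q
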